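/- For every complex number q with |q| < 1, Z(q) = ∑_{n=1}^∞ (q^n/(1+q^{2n-1})) · ∑_{k=n}^∞ q^k/(1-q^{2k}). -/

import Mathlib

/-!
Expand `1 / (1 - q^(2k+1))` as a geometric series in `j`: the `(k, n)` term of `Z(q)` becomes
`q^(2(k+1)(n+1) + (2k+1)j) / (1 + q^(2n+1))`. Since
`2(k+1)(n+1) + (2k+1)j = (n+1) + (n+1+j) + 2k(n+1+j)`,
summing the geometric series in `k` instead gives `q^(n+1) q^(n+1+j) / (1 - q^(2(n+1+j)))`.
All interchanges are justified by absolute convergence.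
-/

open Complex

noncomputable def Zser (q : ℂ) : ℂ :=
  ∑' k : ℕ, ∑' n : ℕ,
    q ^ (2 * (k + 1) * (n + 1)) / ((1 + q ^ (2 * n + 1)) * (1 - q ^ (2 * k + 1)))

lemma summable_pow_of_add_le {r : ℝ} (hr₀ : 0 ≤ r) (hr₁ : r < 1) {e : ℕ × ℕ → ℕ}
    (he : ∀ p, p.1 + p.2 ≤ e p) : Summable fun p => r ^ e p := by
  have hgeom := summable_geometric_of_lt_one hr₀ hr₁
  refine Summable.of_nonneg_of_le (fun _ => pow_nonneg hr₀ _) (fun p => ?_)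
    (hgeom.mul_of_nonneg hgeom (fun _ => pow_nonneg hr₀ _) (fun _ => pow_nonneg hr₀ _))
  rw [← pow_add]
  exact pow_le_pow_of_le_one hr₀ hr₁.le (he p)

section NormedField

variable {K : Type*} [NormedField K] {q : K}

lemma summable_pow_of_add_le_of_norm_lt_one [CompleteSpace K] (hq : ‖q‖ < 1)
    {e : ℕ × ℕ → ℕ} (he : ∀ p, p.1 + p.2 ≤ e p) : Summable fun p => q ^ e p :=
  .of_norm (by simpa only [norm_pow] using summable_pow_of_add_le (norm_nonneg q) hq he)

lemma div_one_sub_eq_tsum_mul_pow {x : K} (hx : ‖x‖ < 1) (c : K) :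
    c / (1 - x) = ∑' j : ℕ, c * x ^ j := by
  rw [tsum_mul_left, tsum_geometric_of_norm_lt_one hx, div_eq_mul_inv]

lemma norm_pow_lt_one (hq : ‖q‖ < 1) {m : ℕ} (hm : m ≠ 0) : ‖q ^ m‖ < 1 := by
  rw [norm_pow]
  exact pow_lt_one₀ (norm_nonneg q) hq hm

lemma one_sub_norm_le_norm_one_sub_pow (hq : ‖q‖ ≤ 1) {m : ℕ} (hm : m ≠ 0) :
    1 - ‖q‖ ≤ ‖1 - q ^ m‖ :=
  calc 1 - ‖q‖ ≤ 1 - ‖q ^ m‖ := by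
        rw [norm_pow]
        linarith [pow_le_of_le_one (norm_nonneg q) hq hm]
    _ ≤ ‖1 - q ^ m‖ := by simpa only [norm_one] using norm_sub_norm_le (1 : K) (q ^ m)

lemma one_sub_norm_le_norm_one_add_pow_odd (hq : ‖q‖ ≤ 1) (n : ℕ) :
    1 - ‖q‖ ≤ ‖1 + q ^ (2 * n + 1)‖ := by
  have h := one_sub_norm_le_norm_one_sub_pow (q := -q) (by rwa [norm_neg]) (m := 2 * n + 1)
    (by omega)
  rwa [norm_neg, Odd.neg_pow ⟨n, rfl⟩, sub_neg_eq_add] at h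

variable [CompleteSpace K]

lemma tsum_pow_div_one_sub_pow_odd (hq : ‖q‖ < 1) (n : ℕ) :
    ∑' k : ℕ, q ^ (2 * (k + 1) * (n + 1)) / (1 - q ^ (2 * k + 1)) =
      q ^ (n + 1) * ∑' m : ℕ, q ^ (n + 1 + m) / (1 - q ^ (2 * (n + 1 + m))) := by
  have hsum : Summable (Function.uncurry fun k j : ℕ =>
      q ^ (2 * (k + 1) * (n + 1) + (2 * k + 1) * j)) :=
    summable_pow_of_add_le_of_norm_lt_one hq fun ⟨k, j⟩ => by dsimp only; nlinarith
  calc ∑' k : ℕ, q ^ (2 * (k + 1) * (n + 1)) / (1 - q ^ (2 * k + 1))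
      = ∑' (k : ℕ) (j : ℕ), q ^ (2 * (k + 1) * (n + 1) + (2 * k + 1) * j) := by
        refine tsum_congr fun k => ?_
        rw [div_one_sub_eq_tsum_mul_pow (norm_pow_lt_one hq (by omega))]
        simp only [← pow_mul, ← pow_add]
    _ = ∑' (j : ℕ) (k : ℕ), q ^ (2 * (k + 1) * (n + 1) + (2 * k + 1) * j) :=
        hsum.tsum_comm.symm
    _ = ∑' j : ℕ, q ^ (n + 1) * (q ^ (n + 1 + j) / (1 - q ^ (2 * (n + 1 + j)))) := by
        refine tsum_congr fun j => ?_
        rw [div_one_sub_eq_tsum_mul_pow (norm_pow_lt_one hq (by omega)), ← tsum_mul_left]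
        refine tsum_congr fun k => ?_
        rw [← pow_mul, ← pow_add, ← pow_add]
        ring_nf
    _ = q ^ (n + 1) * ∑' m : ℕ, q ^ (n + 1 + m) / (1 - q ^ (2 * (n + 1 + m))) :=
        tsum_mul_left

lemma summable_pow_div_one_add_pow_odd_mul_one_sub_pow_odd (hq : ‖q‖ < 1) :
    Summable (Function.uncurry fun k n : ℕ =>
      q ^ (2 * (k + 1) * (n + 1)) / ((1 + q ^ (2 * n + 1)) * (1 - q ^ (2 * k + 1)))) := by
  have hpos : 0 < 1 - ‖q‖ := by linarith
  have hbound := (summable_pow_of_add_le (norm_nonneg q) hq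
    (e := fun p => 2 * (p.1 + 1) * (p.2 + 1)) fun _ => by nlinarith).div_const
    ((1 - ‖q‖) * (1 - ‖q‖))
  refine .of_norm_bounded hbound fun ⟨k, n⟩ => ?_
  simp only [Function.uncurry, norm_div, norm_mul, norm_pow]
  exact div_le_div_of_nonneg_left (by positivity) (by positivity)
    (mul_le_mul (one_sub_norm_le_norm_one_add_pow_odd hq.le n)
      (one_sub_norm_le_norm_one_sub_pow hq.le (by omega)) hpos.le (norm_nonneg _))

end NormedField

theorem stmt19 (q : ℂ) (hq : ‖q‖ < 1) :
    Zser q =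
      ∑' n : ℕ, (q ^ (n + 1) / (1 + q ^ (2 * n + 1))) *
        ∑' m : ℕ, q ^ (n + 1 + m) / (1 - q ^ (2 * (n + 1 + m))) := by
  rw [Zser, ← (summable_pow_div_one_add_pow_odd_mul_one_sub_pow_odd hq).tsum_comm]
  refine tsum_congr fun n => ?_
  simp_rw [mul_comm (1 + q ^ (2 * n + 1)), ← div_div]
  rw [tsum_div_const, tsum_pow_div_one_sub_pow_odd hq n, mul_div_right_comm]
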